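/- There exists a two-player stochastic game G with payoffs bounded in [−1,1] such that for every defender strategy D there is an oblivious adversary A with limsup_{T→∞} Regret⁰(D, A, G, T, F) > 0, where F is the set of fixed strategies; i.e., no (even inefficient) oblivious regret minimization algorithm exists for general stochastic games. -/

import Mathlib

open Filter

/-- Payoff of the counterexample stochastic game: states are `Bool`
(`false = σ₁`, `true = σ₂`, the absorbing sink); defender actions are `Bool`
(`true = d₁`, `false = d₂`).  `P(d₁,σ₁) = −1`, `P(d₂,σ₁) = 0`,
`P(·,σ₂) = 1`; payoffs lie in `[−1,1]`. -/
def cPay (d : Bool) (σ : Bool) : ℝ := if σ then 1 else if d then -1 else 0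

/-- Transition: `σ₁ → σ₂` occurs exactly when the joint action `(d₁, a₁)` is
played (adversary actions are `Bool`, `true = a₁`); `σ₂` is a sink. -/
def cStep (σ d a : Bool) : Bool := σ || (d && a)

/-- The defender's action at round `t` against the oblivious adversary action
sequence `a`, for a (history-dependent) defender strategy `D` that observes
the past adversary actions. -/
def dAct (D : List Bool → Bool) (a : ℕ → Bool) (t : ℕ) : Bool :=
  D (List.ofFn fun i : Fin t => a i)

/-- State trajectory under the defender strategy `D`. -/
def dState (D : List Bool → Bool) (a : ℕ → Bool) : ℕ → Bool
  | 0 => false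
  | t + 1 => cStep (dState D a t) (dAct D a t) (a t)

/-- Total payoff of the defender strategy `D` over `T` rounds. -/
def dTotal (D : List Bool → Bool) (a : ℕ → Bool) (T : ℕ) : ℝ :=
  ∑ t ∈ Finset.range T, cPay (dAct D a t) (dState D a t)

/-- State trajectory under a fixed strategy `f : state → action`. -/
def fState (f : Bool → Bool) (a : ℕ → Bool) : ℕ → Bool
  | 0 => false
  | t + 1 => cStep (fState f a t) (f (fState f a t)) (a t)

/-- Total payoff of the fixed strategy `f` over `T` rounds. -/
def fTotal (f : Bool → Bool) (a : ℕ → Bool) (T : ℕ) : ℝ :=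
  ∑ t ∈ Finset.range T, cPay (f (fState f a t)) (fState f a t)

/-- Average oblivious regret at horizon `T`: the best fixed strategy's average
payoff minus the defender's average payoff, against the same oblivious
adversary action sequence `a`. -/
noncomputable def regret0 (D : List Bool → Bool) (a : ℕ → Bool) (T : ℕ) : ℝ :=
  (⨆ f : Bool → Bool, fTotal f a T / T) - dTotal D a T / T

/-!
Against a defender `D`, let the adversary play `a₁` exactly at the rounds where `D` is about to
play `d₂`; this sequence is computed in advance from `D`, so the adversary is oblivious. Then `D`
never leaves `σ₁` and earns at most `0` per round. If the adversary never plays `a₁`, `D` plays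
`d₁` throughout and earns `-1` per round while "always `d₂`" earns `0`. Otherwise, after the first
`a₁` at round `t₀`, "always `d₁`" sits in the sink from round `t₀ + 1` on, so its average tends to
`1`. Either way the regret is eventually bounded below by a positive constant, and it is bounded
above by `2`, so its limsup is positive.
-/

theorem neg_one_le_cPay (d σ : Bool) : -1 ≤ cPay d σ := by
  cases d <;> cases σ <;> norm_num [cPay]

theorem cPay_le_one (d σ : Bool) : cPay d σ ≤ 1 := by
  cases d <;> cases σ <;> norm_num [cPay]

theorem fTotal_le (f : Bool → Bool) (a : ℕ → Bool) (T : ℕ) : fTotal f a T ≤ T := by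
  simpa [fTotal] using Finset.sum_le_sum fun t (_ : t ∈ Finset.range T) =>
    cPay_le_one (f (fState f a t)) (fState f a t)

theorem neg_le_fTotal (f : Bool → Bool) (a : ℕ → Bool) (T : ℕ) : -(T : ℝ) ≤ fTotal f a T := by
  simpa [fTotal] using Finset.sum_le_sum fun t (_ : t ∈ Finset.range T) =>
    neg_one_le_cPay (f (fState f a t)) (fState f a t)

theorem neg_le_dTotal (D : List Bool → Bool) (a : ℕ → Bool) (T : ℕ) : -(T : ℝ) ≤ dTotal D a T := by
  simpa [dTotal] using Finset.sum_le_sum fun t (_ : t ∈ Finset.range T) =>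
    neg_one_le_cPay (dAct D a t) (dState D a t)

theorem fState_add_of_eq_true {f : Bool → Bool} {a : ℕ → Bool} {n : ℕ}
    (h : fState f a n = true) (k : ℕ) : fState f a (n + k) = true := by
  induction k with
  | zero => exact h
  | succ k ih => simp [fState, cStep, ih]

theorem fTotal_add_of_fState_eq_true {f : Bool → Bool} {a : ℕ → Bool} {n : ℕ}
    (h : fState f a n = true) (k : ℕ) : fTotal f a (n + k) = fTotal f a n + k := by
  simp [fTotal, Finset.sum_range_add, fState_add_of_eq_true h, cPay]

theorem fState_const_false (a : ℕ → Bool) (t : ℕ) : fState (fun _ => false) a t = false := by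
  induction t with
  | zero => rfl
  | succ t ih => simp [fState, cStep, ih]

theorem fTotal_const_false (a : ℕ → Bool) (T : ℕ) : fTotal (fun _ => false) a T = 0 := by
  simp [fTotal, fState_const_false, cPay]

theorem fTotal_const_true_ge {a : ℕ → Bool} {t₀ T : ℕ} (ht₀ : a t₀ = true) (hT : t₀ + 1 ≤ T) :
    (T : ℝ) - 2 * (t₀ + 1) ≤ fTotal (fun _ => true) a T := by
  have hsink : fState (fun _ => true) a (t₀ + 1) = true := by simp [fState, cStep, ht₀]
  obtain ⟨k, rfl⟩ := Nat.exists_eq_add_of_le hT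
  rw [fTotal_add_of_fState_eq_true hsink]
  have := neg_le_fTotal (fun _ => true) a (t₀ + 1)
  push_cast at this ⊢
  linarith

theorem sub_le_regret0 (D : List Bool → Bool) (a : ℕ → Bool) (T : ℕ) (f : Bool → Bool) :
    fTotal f a T / T - dTotal D a T / T ≤ regret0 D a T :=
  sub_le_sub_right (le_ciSup (Set.finite_range fun g => fTotal g a T / T).bddAbove f) _

theorem regret0_le_two (D : List Bool → Bool) (a : ℕ → Bool) (T : ℕ) : regret0 D a T ≤ 2 := by
  rcases Nat.eq_zero_or_pos T with rfl | hT
  · simp [regret0]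
  have hT' : (0 : ℝ) < T := by exact_mod_cast hT
  have hsup : (⨆ f : Bool → Bool, fTotal f a T / T) ≤ 1 :=
    ciSup_le fun f => (div_le_one hT').2 (fTotal_le f a T)
  have hD : -1 ≤ dTotal D a T / T := by
    rw [le_div_iff₀ hT']
    linarith [neg_le_dTotal D a T]
  rw [regret0]
  linarith

def adv (D : List Bool → Bool) (t : ℕ) : Bool :=
  !D (List.ofFn fun i : Fin t => adv D i)

theorem dAct_adv (D : List Bool → Bool) (t : ℕ) : dAct D (adv D) t = !adv D t := by
  rw [adv, dAct, Bool.not_not]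

theorem dState_adv (D : List Bool → Bool) (t : ℕ) : dState D (adv D) t = false := by
  induction t with
  | zero => rfl
  | succ t ih => simp [dState, cStep, ih, dAct_adv]

theorem cPay_dAct_adv (D : List Bool → Bool) (t : ℕ) :
    cPay (dAct D (adv D) t) (dState D (adv D) t) = if adv D t then 0 else -1 := by
  cases h : adv D t <;> simp [cPay, dState_adv, dAct_adv, h]

theorem dTotal_adv_nonpos (D : List Bool → Bool) (T : ℕ) : dTotal D (adv D) T ≤ 0 :=
  Finset.sum_nonpos fun t _ => by rw [cPay_dAct_adv]; split <;> norm_num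

theorem one_le_regret0_adv {D : List Bool → Bool} (hD : ∀ t, adv D t = false) {T : ℕ}
    (hT : 0 < T) : 1 ≤ regret0 D (adv D) T := by
  have hdT : dTotal D (adv D) T = -T := by simp [dTotal, cPay_dAct_adv, hD]
  have hT' : (T : ℝ) ≠ 0 := by exact_mod_cast hT.ne'
  simpa [fTotal_const_false, hdT, neg_div, div_self hT'] using
    sub_le_regret0 D (adv D) T fun _ => false

theorem half_le_regret0_adv {D : List Bool → Bool} {t₀ : ℕ} (ht₀ : adv D t₀ = true) {T : ℕ}
    (hT : 4 * (t₀ + 1) ≤ T) : 1 / 2 ≤ regret0 D (adv D) T := by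
  have hT' : (0 : ℝ) < T := by exact_mod_cast (show 0 < T by omega)
  have hf : 1 / 2 ≤ fTotal (fun _ => true) (adv D) T / T := by
    rw [le_div_iff₀ hT']
    have : 4 * ((t₀ : ℝ) + 1) ≤ T := by exact_mod_cast hT
    linarith [fTotal_const_true_ge ht₀ (show t₀ + 1 ≤ T by omega)]
  have hd : dTotal D (adv D) T / T ≤ 0 :=
    div_nonpos_of_nonpos_of_nonneg (dTotal_adv_nonpos D T) hT'.le
  linarith [sub_le_regret0 D (adv D) T fun _ => true]

theorem zero_lt_limsup_regret0 {D : List Bool → Bool} {a : ℕ → Bool} {c : ℝ} (hc : 0 < c)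
    (h : ∀ᶠ T in atTop, c ≤ regret0 D a T) : 0 < limsup (fun T : ℕ => regret0 D a T) atTop :=
  hc.trans_le <| le_limsup_of_frequently_le h.frequently
    ⟨2, eventually_map.2 (Eventually.of_forall (regret0_le_two D a))⟩

/-- in this stochastic game (with payoffs in `[−1,1]`), for
every defender strategy `D` there is an oblivious adversary `a` such that the
average oblivious regret does not vanish:
`limsup_{T→∞} Regret⁰(D, a, G, T, F) > 0`.  Hence no oblivious regret
minimization algorithm exists for general stochastic games. -/
theorem no_regret_minimization_stochastic :
    ∀ D : List Bool → Bool, ∃ a : ℕ → Bool,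
      0 < Filter.limsup (fun T : ℕ => regret0 D a T) Filter.atTop := by
  intro D
  refine ⟨adv D, ?_⟩
  by_cases hD : ∀ t, adv D t = false
  · exact zero_lt_limsup_regret0 one_pos
      (eventually_atTop.2 ⟨1, fun T hT => one_le_regret0_adv hD hT⟩)
  · obtain ⟨t₀, ht₀⟩ : ∃ t₀, adv D t₀ = true := by simpa using hD
    exact zero_lt_limsup_regret0 one_half_pos
      (eventually_atTop.2 ⟨4 * (t₀ + 1), fun T hT => half_le_regret0_adv ht₀ hT⟩)
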